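/- arXiv:2510.13022 — 3 statements merged into one kernel-verified Lean document; each statement's English description precedes it below -/
import Mathlib

section
/- Let Y be a measurable space, μ a probability measure on Y × Y, and r₁, r₂ : Y → ℝ bounded measurable functions with sup_{y ∈ Y} |r₁(y) − r₂(y)| ≤ Δ for some Δ ≥ 0. Define p_k(y, y') = σ(r_k(y) − r_k(y')) for k = 1, 2, where σ is the sigmoid function. Then |Var_μ(p₁) − Var_μ(p₂)| ≤ 2Δ. -/
open MeasureTheory

/-- The sigmoid function `σ(z) = 1 / (1 + exp (-z))`. -/
noncomputable def sigmoid (z : ℝ) : ℝ := 1 / (1 + Real.exp (-z))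

/-- Variance of a real-valued function: `∫ U² dμ - (∫ U dμ)²`. -/
noncomputable def Var {Ω : Type*} [MeasurableSpace Ω] (μ : Measure Ω) (U : Ω → ℝ) : ℝ :=
  (∫ ω, (U ω) ^ 2 ∂μ) - (∫ ω, U ω ∂μ) ^ 2

/-!
Since `σ' = σ (1 - σ) ≤ 1/4`, the sigmoid is `1/4`-Lipschitz, so `p₁` and `p₂` differ pointwise by
at most `(Δ + Δ) / 4 = Δ / 2`. For functions bounded by `M` and `ε`-close, `a² - b² = (a + b)(a - b)`
shows that both the second moments and the squared means are `2Mε`-close, hence the variances are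
`4Mε`-close; here `M = 1` and `ε = Δ / 2`.
-/

lemma abs_sq_sub_sq_le {a b M ε : ℝ} (ha : |a| ≤ M) (hb : |b| ≤ M) (hab : |a - b| ≤ ε) :
    |a ^ 2 - b ^ 2| ≤ 2 * M * ε := by
  have hsum : |a + b| ≤ 2 * M := by linarith [abs_add_le a b]
  rw [sq_sub_sq, abs_mul]
  exact mul_le_mul hsum hab (abs_nonneg _) (by linarith [abs_nonneg a])

section Variance

variable {Ω : Type*} [MeasurableSpace Ω] {μ : Measure Ω} [IsProbabilityMeasure μ]
  {f g : Ω → ℝ} {M ε : ℝ}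

lemma abs_integral_le_of_forall_abs_le (h : ∀ ω, |f ω| ≤ M) : |∫ ω, f ω ∂μ| ≤ M := by
  simpa using norm_integral_le_of_norm_le_const (μ := μ) (f := f) (Filter.Eventually.of_forall h)

lemma abs_integral_sub_integral_le (hf : Integrable f μ) (hg : Integrable g μ)
    (h : ∀ ω, |f ω - g ω| ≤ ε) : |∫ ω, f ω ∂μ - ∫ ω, g ω ∂μ| ≤ ε := by
  rw [← integral_sub hf hg]
  exact abs_integral_le_of_forall_abs_le h

lemma integrable_pow_of_forall_abs_le (hf : AEStronglyMeasurable f μ) (h : ∀ ω, |f ω| ≤ M)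
    (n : ℕ) : Integrable (fun ω => f ω ^ n) μ :=
  .of_bound (hf.pow n) (M ^ n) <| Filter.Eventually.of_forall fun ω => by
    simpa [abs_pow] using pow_le_pow_left₀ (abs_nonneg _) (h ω) n

lemma abs_var_sub_var_le (hf : AEStronglyMeasurable f μ) (hg : AEStronglyMeasurable g μ)
    (hfM : ∀ ω, |f ω| ≤ M) (hgM : ∀ ω, |g ω| ≤ M) (hfg : ∀ ω, |f ω - g ω| ≤ ε) :
    |Var μ f - Var μ g| ≤ 4 * M * ε := by
  have hsq : |∫ ω, f ω ^ 2 ∂μ - ∫ ω, g ω ^ 2 ∂μ| ≤ 2 * M * ε :=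
    abs_integral_sub_integral_le (integrable_pow_of_forall_abs_le hf hfM 2)
      (integrable_pow_of_forall_abs_le hg hgM 2)
      fun ω => abs_sq_sub_sq_le (hfM ω) (hgM ω) (hfg ω)
  have hmean : |(∫ ω, f ω ∂μ) ^ 2 - (∫ ω, g ω ∂μ) ^ 2| ≤ 2 * M * ε := by
    refine abs_sq_sub_sq_le (abs_integral_le_of_forall_abs_le hfM)
      (abs_integral_le_of_forall_abs_le hgM) (abs_integral_sub_integral_le ?_ ?_ hfg)
    · simpa using integrable_pow_of_forall_abs_le hf hfM 1
    · simpa using integrable_pow_of_forall_abs_le hg hgM 1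
  rw [Var, Var, sub_sub_sub_comm]
  calc _ ≤ _ := abs_sub _ _
    _ ≤ 2 * M * ε + 2 * M * ε := add_le_add hsq hmean
    _ = 4 * M * ε := by ring

end Variance

lemma sigmoid_eq_real_sigmoid : sigmoid = Real.sigmoid :=
  funext fun z => one_div (1 + Real.exp (-z))

open Real in
lemma abs_sigmoid_le_one (z : ℝ) : |Real.sigmoid z| ≤ 1 :=
  abs_le.2 ⟨by linarith [sigmoid_nonneg z], sigmoid_le_one z⟩

open Real in
lemma lipschitzWith_sigmoid : LipschitzWith 4⁻¹ Real.sigmoid := by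
  refine lipschitzWith_of_nnnorm_deriv_le differentiable_sigmoid fun z => ?_
  rw [← NNReal.coe_le_coe, coe_nnnorm, deriv_sigmoid, Real.norm_eq_abs,
    abs_of_nonneg (mul_nonneg (sigmoid_nonneg z) (sub_nonneg.2 (sigmoid_le_one z)))]
  push_cast
  nlinarith [sq_nonneg (Real.sigmoid z - 2⁻¹)]

lemma abs_sigmoid_sub_sub_sigmoid_sub_le {Y : Type*} {r₁ r₂ : Y → ℝ} {Δ : ℝ}
    (h : ∀ y, |r₁ y - r₂ y| ≤ Δ) (x y : Y) :
    |Real.sigmoid (r₁ x - r₁ y) - Real.sigmoid (r₂ x - r₂ y)| ≤ Δ / 2 := by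
  have hdist := lipschitzWith_sigmoid.dist_le_mul (r₁ x - r₁ y) (r₂ x - r₂ y)
  rw [Real.dist_eq, Real.dist_eq, sub_sub_sub_comm] at hdist
  push_cast at hdist
  linarith [abs_sub (r₁ x - r₂ x) (r₁ y - r₂ y), h x, h y]

theorem pvar_diff_le_two_delta_general {Y : Type*} [MeasurableSpace Y]
    (μ : Measure (Y × Y)) [IsProbabilityMeasure μ]
    (r₁ r₂ : Y → ℝ) (hr₁ : Measurable r₁) (hr₂ : Measurable r₂)
    (Δ : ℝ) (hdiff : ∀ y, |r₁ y - r₂ y| ≤ Δ) :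
    |Var μ (fun yy => sigmoid (r₁ yy.1 - r₁ yy.2)) -
      Var μ (fun yy => sigmoid (r₂ yy.1 - r₂ yy.2))| ≤ 2 * Δ := by
  rw [sigmoid_eq_real_sigmoid]
  have hmeas {r : Y → ℝ} (hr : Measurable r) :
      AEStronglyMeasurable (fun yy : Y × Y => Real.sigmoid (r yy.1 - r yy.2)) μ :=
    (by fun_prop : Measurable _).aestronglyMeasurable
  calc _ ≤ 4 * 1 * (Δ / 2) :=
        abs_var_sub_var_le (hmeas hr₁) (hmeas hr₂) (fun _ => abs_sigmoid_le_one _)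
          (fun _ => abs_sigmoid_le_one _)
          fun yy => abs_sigmoid_sub_sub_sigmoid_sub_le hdiff yy.1 yy.2
    _ = 2 * Δ := by ring

theorem pvar_diff_le_two_delta {Y : Type*} [MeasurableSpace Y]
    (μ : Measure (Y × Y)) [IsProbabilityMeasure μ]
    (r₁ r₂ : Y → ℝ) (hr₁ : Measurable r₁) (hr₂ : Measurable r₂)
    (hb₁ : ∃ B₁, ∀ y, |r₁ y| ≤ B₁) (hb₂ : ∃ B₂, ∀ y, |r₂ y| ≤ B₂)
    (Δ : ℝ) (hΔ : 0 ≤ Δ) (hdiff : ∀ y, |r₁ y - r₂ y| ≤ Δ) :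
    |Var μ (fun yy => sigmoid (r₁ yy.1 - r₁ yy.2)) -
      Var μ (fun yy => sigmoid (r₂ yy.1 - r₂ yy.2))| ≤ 2 * Δ :=
  pvar_diff_le_two_delta_general μ r₁ r₂ hr₁ hr₂ Δ hdiff
end

section
/- Let π be a probability measure on a measurable space Y, let E be a real Banach space, and let g : Y → E be a measurable function with ‖g(y)‖ ≤ G for all y and some G ≥ 0. Let p : Y × Y → ℝ be a measurable function with values in [0, 1] satisfying p(y, y') + p(y', y) = 1 for all y, y', and let V = Var_{π⊗π}(p). Then for every c > 0: ‖∫ (p(y, y') − 1/2)·(g(y) − g(y')) d(π ⊗ π)(y, y')‖ ≤ 2Gc + G·V/c². -/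
/-!
Write `t = p(y, y') - 1/2`, so that `|t| ≤ 1/2` and `‖t • (g y - g y')‖ ≤ 2G|t|`.
Where `|t| ≤ c` this is at most `2Gc`; where `|t| > c` it is at most `G ≤ G t²/c²`.
Integrate: the symmetry `p(y, y') + p(y', y) = 1` gives `p` mean `1/2` under `π ⊗ π`,
so the integral of `t²` is exactly the variance of `p`.
-/

open MeasureTheory

lemma abs_le_add_mul_sq_div {t a c : ℝ} (ht : |t| ≤ a) (hc : 0 < c) :
    |t| ≤ c + a * t ^ 2 / c ^ 2 := by
  rcases le_or_gt |t| c with hle | hgt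
  · have : 0 ≤ a * t ^ 2 / c ^ 2 := by have := (abs_nonneg t).trans ht; positivity
    linarith
  · have hsq : c ^ 2 ≤ t ^ 2 := by rw [← sq_abs t]; gcongr
    have : a ≤ a * t ^ 2 / c ^ 2 := by
      rw [le_div_iff₀ (by positivity)]
      exact mul_le_mul_of_nonneg_left hsq ((abs_nonneg t).trans ht)
    linarith

lemma Var_eq_integral_sub_sq {Ω : Type*} [MeasurableSpace Ω] {μ : Measure Ω}
    [IsProbabilityMeasure μ] {U : Ω → ℝ} (hU : MemLp U 2 μ) :
    Var μ U = ∫ ω, (U ω - ∫ ω', U ω' ∂μ) ^ 2 ∂μ := by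
  rw [← ProbabilityTheory.variance_eq_integral hU.aemeasurable,
    ProbabilityTheory.variance_eq_sub hU, Var]
  rfl

lemma integral_prod_eq_half_of_add_swap_eq_one {Y : Type*} [MeasurableSpace Y]
    {π : Measure Y} [IsProbabilityMeasure π] {p : Y × Y → ℝ} (hp : Integrable p (π.prod π))
    (hsym : ∀ y y' : Y, p (y, y') + p (y', y) = 1) :
    ∫ yy, p yy ∂(π.prod π) = 1 / 2 := by
  have hswap : ∫ yy, p yy.swap ∂(π.prod π) = ∫ yy, p yy ∂(π.prod π) := integral_prod_swap p
  have hsum : ∫ yy, (p yy + p yy.swap) ∂(π.prod π) = 1 := by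
    simp only [Prod.swap, hsym, integral_const, probReal_univ, one_smul]
  have hp_swap : Integrable (fun yy => p yy.swap) (π.prod π) := hp.swap
  rw [integral_add hp hp_swap, hswap] at hsum
  linarith

theorem chebyshev_split_bound_general {Y : Type*} [MeasurableSpace Y]
    {E : Type*} [NormedAddCommGroup E] [NormedSpace ℝ E]
    (π : Measure Y) [IsProbabilityMeasure π]
    (g : Y → E) (G : ℝ) (hG : 0 ≤ G)
    (hgb : ∀ y, ‖g y‖ ≤ G)
    (p : Y × Y → ℝ) (hp : Measurable p) (hp01 : ∀ yy, 0 ≤ p yy ∧ p yy ≤ 1)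
    (hsym : ∀ y y' : Y, p (y, y') + p (y', y) = 1) :
    ∀ c : ℝ, 0 < c →
      ‖∫ yy : Y × Y, (p yy - 1 / 2) • (g yy.1 - g yy.2) ∂(π.prod π)‖ ≤
        2 * G * c + G * Var (π.prod π) p / c ^ 2 := by
  intro c hc
  have hdev : ∀ yy, |p yy - 1 / 2| ≤ 1 / 2 := fun yy => by
    rw [abs_le]; constructor <;> linarith [hp01 yy]
  have hpL2 : MemLp p 2 (π.prod π) := MemLp.of_bound hp.aestronglyMeasurable 1 <|
    ae_of_all _ fun yy => by rw [Real.norm_eq_abs, abs_le]; constructor <;> linarith [hp01 yy]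
  have hmean := integral_prod_eq_half_of_add_swap_eq_one (hpL2.integrable one_le_two) hsym
  have hdevL2 : Integrable (fun yy => (p yy - 1 / 2) ^ 2) (π.prod π) :=
    (hpL2.sub (memLp_const _)).integrable_sq
  have hbound : ∀ yy : Y × Y, ‖(p yy - 1 / 2) • (g yy.1 - g yy.2)‖ ≤
      2 * G * (c + 1 / 2 * (p yy - 1 / 2) ^ 2 / c ^ 2) := fun yy => by
    have hg : ‖g yy.1 - g yy.2‖ ≤ 2 * G := by
      linarith [norm_sub_le (g yy.1) (g yy.2), hgb yy.1, hgb yy.2]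
    rw [norm_smul, Real.norm_eq_abs, mul_comm]
    exact mul_le_mul hg (abs_le_add_mul_sq_div (hdev yy) hc) (abs_nonneg _) (by positivity)
  calc _ ≤ ∫ yy, 2 * G * (c + 1 / 2 * (p yy - 1 / 2) ^ 2 / c ^ 2) ∂(π.prod π) :=
        norm_integral_le_of_norm_le
          (((integrable_const c).add ((hdevL2.const_mul _).div_const _)).const_mul _)
          (ae_of_all _ hbound)
    _ = 2 * G * c + G * Var (π.prod π) p / c ^ 2 := by
        rw [integral_const_mul, integral_add (integrable_const c)
          ((hdevL2.const_mul _).div_const _), integral_div, integral_const_mul,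
          Var_eq_integral_sub_sq hpL2, hmean]
        simp only [integral_const, probReal_univ, one_smul]
        ring

theorem chebyshev_split_bound {Y : Type*} [MeasurableSpace Y]
    {E : Type*} [NormedAddCommGroup E] [NormedSpace ℝ E] [CompleteSpace E]
    (π : Measure Y) [IsProbabilityMeasure π]
    (g : Y → E) (hgm : StronglyMeasurable g) (G : ℝ) (hG : 0 ≤ G)
    (hgb : ∀ y, ‖g y‖ ≤ G)
    (p : Y × Y → ℝ) (hp : Measurable p) (hp01 : ∀ yy, 0 ≤ p yy ∧ p yy ≤ 1)
    (hsym : ∀ y y' : Y, p (y, y') + p (y', y) = 1) :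
    ∀ c : ℝ, 0 < c →
      ‖∫ yy : Y × Y, (p yy - 1 / 2) • (g yy.1 - g yy.2) ∂(π.prod π)‖ ≤
        2 * G * c + G * Var (π.prod π) p / c ^ 2 :=
  chebyshev_split_bound_general π g G hG hgb p hp hp01 hsym
end

section
/- (Abstract form of Theorem 1: preference variance bounds the DPO gradient.) Let π be a probability measure on a measurable space Y, let E be a real Banach space, and let g : Y → E be a measurable function with ‖g(y)‖ ≤ G for all y and some G ≥ 0. Let p : Y × Y → ℝ be a measurable function with values in [0, 1] satisfying p(y, y') + p(y', y) = 1 for all y, y', and let V = Var_{π⊗π}(p). Then ‖∫ (1 − p(y, y'))·(g(y) − g(y')) d(π ⊗ π)(y, y')‖ ≤ 3·G·V^{1/3}. -/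
open MeasureTheory

open ProbabilityTheory

/-!
Since `p (y, y') - 1/2` and `g y - g y'` are both antisymmetric under swapping `y` and `y'`, their
integrals against `π ⊗ π` vanish. Hence `∫ p = 1/2`, the constant part `1/2` of `1 - p` integrates
against `g y - g y'` to zero, and the integral equals `∫ (1/2 - p) • (g y - g y')`. Its norm is at
most `2 G ∫ |p - 1/2|`, which Cauchy–Schwarz bounds by `2 G √V`; as `V ≤ 1/4`, `√V ≤ V^{1/3}`.
-/

section Antisymmetric

variable {Y : Type*} [MeasurableSpace Y] {π : Measure Y}

lemma integral_prod_self_eq_zero_of_antisymm [SFinite π]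
    {E : Type*} [NormedAddCommGroup E] [NormedSpace ℝ E] {f : Y × Y → E}
    (hf : ∀ y y', f (y', y) = -f (y, y')) : ∫ z, f z ∂π.prod π = 0 := by
  have hswap := integral_prod_swap (μ := π) (ν := π) f
  have hf_swap : (fun z : Y × Y => f z.swap) = fun z => -f z := funext fun z => hf z.1 z.2
  rw [hf_swap, integral_neg] at hswap
  have htwo : (2 : ℝ) • ∫ z, f z ∂π.prod π = 0 := by
    rw [two_smul, ← sub_neg_eq_add, hswap, sub_self]
  exact (smul_eq_zero.mp htwo).resolve_left two_ne_zero

lemma integral_prod_self_eq_half [IsProbabilityMeasure π] {p : Y × Y → ℝ}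
    (hp : Integrable p (π.prod π)) (hsym : ∀ y y', p (y, y') + p (y', y) = 1) :
    ∫ z, p z ∂π.prod π = 1 / 2 := by
  have hcentered : ∫ z, (p z - 1 / 2) ∂π.prod π = 0 :=
    integral_prod_self_eq_zero_of_antisymm fun y y' => by linarith [hsym y y']
  rw [integral_sub hp (integrable_const _), integral_const, probReal_univ, one_smul] at hcentered
  linarith

end Antisymmetric

section Variance

variable {Ω : Type*} [MeasurableSpace Ω] {μ : Measure Ω} [IsProbabilityMeasure μ] {U : Ω → ℝ}

lemma Var_eq_variance (hU : MemLp U 2 μ) : Var μ U = variance U μ := by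
  rw [Var, variance_eq_sub hU]
  rfl

lemma sq_integral_abs_le_integral_sq (hU : MemLp U 2 μ) :
    (∫ ω, |U ω| ∂μ) ^ 2 ≤ ∫ ω, U ω ^ 2 ∂μ := by
  have hvar := variance_nonneg |U| μ
  rw [variance_eq_sub hU.abs] at hvar
  simp only [Pi.pow_apply, Pi.abs_apply, sq_abs] at hvar
  linarith

lemma integral_abs_sub_integral_le_sqrt_Var (hU : MemLp U 2 μ) :
    ∫ ω, |U ω - ∫ ω', U ω' ∂μ| ∂μ ≤ √(Var μ U) := by
  rw [Var_eq_variance hU, variance_eq_integral hU.aemeasurable]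
  exact Real.le_sqrt_of_sq_le
    (sq_integral_abs_le_integral_sq (hU.sub (memLp_const _)))

end Variance

lemma norm_integral_smul_le_of_integral_eq_zero {Ω : Type*} [MeasurableSpace Ω] {μ : Measure Ω}
    [IsFiniteMeasure μ] {E : Type*} [NormedAddCommGroup E] [NormedSpace ℝ E]
    {c : Ω → ℝ} {h : Ω → E} {B : ℝ} (a : ℝ) (hc : Integrable c μ)
    (hh : AEStronglyMeasurable h μ) (hB : ∀ ω, ‖h ω‖ ≤ B) (h0 : ∫ ω, h ω ∂μ = 0) :
    ‖∫ ω, c ω • h ω ∂μ‖ ≤ B * ∫ ω, |c ω - a| ∂μ := by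
  have hca : Integrable (fun ω => c ω - a) μ := hc.sub (integrable_const a)
  have hcentered : ∫ ω, c ω • h ω ∂μ = ∫ ω, (c ω - a) • h ω ∂μ := by
    have hsplit : ∫ ω, c ω • h ω ∂μ = ∫ ω, ((c ω - a) • h ω + a • h ω) ∂μ := by
      simp only [← add_smul, sub_add_cancel]
    have hcah : Integrable (fun ω => (c ω - a) • h ω) μ := hca.smul_bdd B hh (ae_of_all _ hB)
    have hah : Integrable (fun ω => a • h ω) μ := (Integrable.of_bound hh B (ae_of_all _ hB)).smul a
    rw [hsplit, integral_add hcah hah, integral_smul, h0, smul_zero, add_zero]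
  rw [hcentered, ← integral_const_mul]
  refine norm_integral_le_of_norm_le (hca.abs.const_mul B) (ae_of_all _ fun ω => ?_)
  rw [norm_smul, Real.norm_eq_abs, mul_comm]
  exact mul_le_mul_of_nonneg_right (hB ω) (abs_nonneg _)

lemma sqrt_le_rpow_one_third {x : ℝ} (hx0 : 0 ≤ x) (hx1 : x ≤ 1) :
    √x ≤ x ^ ((1 : ℝ) / 3) := by
  rw [Real.sqrt_eq_rpow]
  exact Real.rpow_le_rpow_of_exponent_ge' hx0 hx1 (by norm_num) (by norm_num)

/-- Abstract form of Theorem 1: preference variance bounds the DPO gradient. -/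
theorem pvar_bounds_dpo_gradient {Y : Type*} [MeasurableSpace Y]
    {E : Type*} [NormedAddCommGroup E] [NormedSpace ℝ E] [CompleteSpace E]
    (π : Measure Y) [IsProbabilityMeasure π]
    (g : Y → E) (hgm : StronglyMeasurable g) (G : ℝ) (hG : 0 ≤ G)
    (hgb : ∀ y, ‖g y‖ ≤ G)
    (p : Y × Y → ℝ) (hp : Measurable p) (hp01 : ∀ yy, 0 ≤ p yy ∧ p yy ≤ 1)
    (hsym : ∀ y y' : Y, p (y, y') + p (y', y) = 1) :
    ‖∫ yy : Y × Y, (1 - p yy) • (g yy.1 - g yy.2) ∂(π.prod π)‖ ≤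
      3 * G * (Var (π.prod π) p) ^ ((1 : ℝ) / 3) := by
  have hpIcc : ∀ᵐ yy ∂π.prod π, p yy ∈ Set.Icc 0 1 := ae_of_all _ hp01
  have hpL2 : MemLp p 2 (π.prod π) := memLp_of_bounded hpIcc hp.aestronglyMeasurable 2
  have hmean := integral_prod_self_eq_half (hpL2.integrable one_le_two) hsym
  have hgap : ∀ yy : Y × Y, ‖g yy.1 - g yy.2‖ ≤ 2 * G := fun yy =>
    (norm_sub_le _ _).trans (by linarith [hgb yy.1, hgb yy.2])
  have hgap0 : ∫ yy : Y × Y, (g yy.1 - g yy.2) ∂π.prod π = 0 :=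
    integral_prod_self_eq_zero_of_antisymm fun y y' => (neg_sub _ _).symm
  have hV0 : 0 ≤ Var (π.prod π) p := Var_eq_variance hpL2 ▸ variance_nonneg p _
  have hV1 : Var (π.prod π) p ≤ 1 := by
    rw [Var_eq_variance hpL2]
    linarith [variance_le_sq_of_bounded hpIcc hp.aemeasurable]
  calc ‖∫ yy : Y × Y, (1 - p yy) • (g yy.1 - g yy.2) ∂(π.prod π)‖
      ≤ 2 * G * ∫ yy, |1 - p yy - 1 / 2| ∂π.prod π :=
        norm_integral_smul_le_of_integral_eq_zero (1 / 2)
          ((integrable_const 1).sub (hpL2.integrable one_le_two))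
          ((hgm.comp_measurable measurable_fst).sub
            (hgm.comp_measurable measurable_snd)).aestronglyMeasurable hgap hgap0
    _ = 2 * G * ∫ yy, |p yy - ∫ z, p z ∂π.prod π| ∂π.prod π := by
        refine congrArg _ (integral_congr_ae (ae_of_all _ fun yy => ?_))
        beta_reduce
        rw [hmean, ← abs_neg]
        ring_nf
    _ ≤ 2 * G * √(Var (π.prod π) p) := by
        gcongr
        exact integral_abs_sub_integral_le_sqrt_Var hpL2
    _ ≤ 3 * G * (Var (π.prod π) p) ^ ((1 : ℝ) / 3) := by
        gcongr
        · linarith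
        · exact sqrt_le_rpow_one_third hV0 hV1
end
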